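/- arXiv:2102.08846 — 3 statements merged into one kernel-verified Lean document; each statement's English description precedes it below -/
import Mathlib

section
/- Let γ ∈ (0,2) and let l, j be real numbers with 0 ≤ j ≤ l. Then ∫₀¹ y^{1−γ} exp(−l√(y²+1)) I₀(jy) dy ≤ (2−γ)^{−1} exp(−√(l² − j²)). -/
/-! Since `I₀(z) ≤ e^{|z|}`, the integrand is at most `y^{1−γ} e^{|j| y − l√(y²+1)}`, and
Cauchy–Schwarz for `(|j|, √(l²−j²))` and `(y, 1)` bounds the exponent by `−√(l²−j²)`.
What remains is `∫₀¹ y^{1−γ} dy = (2−γ)⁻¹`. -/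

noncomputable section
open Real MeasureTheory

/-- The modified Bessel function of index zero, `I₀(z) = (1/π)∫₀^π exp(z cos φ) dφ`. -/
def I0 (z : ℝ) : ℝ := (1 / π) * ∫ φ in (0:ℝ)..π, Real.exp (z * Real.cos φ)

@[fun_prop]
lemma continuous_I0 : Continuous I0 :=
  continuous_const.mul <| intervalIntegral.continuous_parametric_intervalIntegral_of_continuous'
    (by fun_prop : Continuous (Function.uncurry fun z φ => Real.exp (z * Real.cos φ))) 0 π

lemma I0_le_exp_abs (z : ℝ) : I0 z ≤ Real.exp |z| := by
  have hcos : ∀ φ, Real.exp (z * Real.cos φ) ≤ Real.exp |z| := fun φ =>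
    Real.exp_le_exp.mpr <| calc
      z * Real.cos φ ≤ |z * Real.cos φ| := le_abs_self _
      _ = |z| * |Real.cos φ| := abs_mul _ _
      _ ≤ |z| := mul_le_of_le_one_right (abs_nonneg z) (Real.abs_cos_le_one φ)
  have hint : ∫ φ in (0:ℝ)..π, Real.exp (z * Real.cos φ) ≤ π * Real.exp |z| := by
    simpa using intervalIntegral.integral_mono_on pi_pos.le
      (Continuous.intervalIntegrable (by fun_prop) _ _) (intervalIntegrable_const (μ := volume))
      (fun φ _ => hcos φ)
  calc I0 z ≤ (1 / π) * (π * Real.exp |z|) := mul_le_mul_of_nonneg_left hint (by positivity)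
    _ = Real.exp |z| := by field_simp

lemma mul_add_sqrt_sub_sq_le {j l : ℝ} (hjl : |j| ≤ l) (y : ℝ) :
    j * y + √(l ^ 2 - j ^ 2) ≤ l * √(y ^ 2 + 1) := by
  have hl : 0 ≤ l := (abs_nonneg j).trans hjl
  have hs : √(l ^ 2 - j ^ 2) ^ 2 = l ^ 2 - j ^ 2 :=
    Real.sq_sqrt (by nlinarith [sq_abs j, abs_nonneg j])
  have hr : √(y ^ 2 + 1) ^ 2 = y ^ 2 + 1 := Real.sq_sqrt (by positivity)
  apply le_of_sq_le_sq _ (mul_nonneg hl (Real.sqrt_nonneg _))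
  rw [mul_pow, hr]
  nlinarith [sq_nonneg (j - √(l ^ 2 - j ^ 2) * y)]

lemma exp_mul_I0_le {j l : ℝ} (hjl : |j| ≤ l) (y : ℝ) :
    Real.exp (-l * √(y ^ 2 + 1)) * I0 (j * y) ≤ Real.exp (-√(l ^ 2 - j ^ 2)) := by
  have hexponent : |j * y| - l * √(y ^ 2 + 1) ≤ -√(l ^ 2 - j ^ 2) := by
    have := mul_add_sqrt_sub_sq_le (j := |j|) (l := l) (by rwa [abs_abs]) |y|
    rw [sq_abs, sq_abs] at this
    rw [abs_mul]
    linarith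
  calc Real.exp (-l * √(y ^ 2 + 1)) * I0 (j * y)
      ≤ Real.exp (-l * √(y ^ 2 + 1)) * Real.exp |j * y| :=
        mul_le_mul_of_nonneg_left (I0_le_exp_abs _) (Real.exp_nonneg _)
    _ = Real.exp (|j * y| - l * √(y ^ 2 + 1)) := by rw [← Real.exp_add]; ring_nf
    _ ≤ Real.exp (-√(l ^ 2 - j ^ 2)) := Real.exp_le_exp.mpr hexponent

lemma integral_rpow_zero_one {r : ℝ} (hr : -1 < r) : ∫ y in (0:ℝ)..1, y ^ r = (r + 1)⁻¹ := by
  rw [integral_rpow (Or.inl hr), Real.one_rpow, Real.zero_rpow (by linarith), sub_zero, one_div]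

/-- Estimate (2.13): `∫₀¹ y^{1−γ} e^{−l√(y²+1)} I₀(jy) dy ≤ (2−γ)⁻¹ e^{−√(l²−j²)}`. -/
theorem Kbar_gamma_bound (γ l j : ℝ) (hγ : γ ∈ Set.Ioo (0:ℝ) 2) (hj : 0 ≤ j) (hjl : j ≤ l) :
    ∫ y in (0:ℝ)..1, y ^ (1 - γ) * Real.exp (-l * Real.sqrt (y ^ 2 + 1)) * I0 (j * y)
      ≤ (2 - γ)⁻¹ * Real.exp (-Real.sqrt (l ^ 2 - j ^ 2)) := by
  have habs : |j| ≤ l := (abs_of_nonneg hj).trans_le hjl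
  have hr : -1 < 1 - γ := by linarith [hγ.2]
  have hrpow : IntervalIntegrable (fun y : ℝ => y ^ (1 - γ)) volume 0 1 :=
    intervalIntegral.intervalIntegrable_rpow' hr
  have hintegrand : IntervalIntegrable
      (fun y : ℝ => y ^ (1 - γ) * (Real.exp (-l * √(y ^ 2 + 1)) * I0 (j * y))) volume 0 1 :=
    hrpow.mul_continuousOn (Continuous.continuousOn (by fun_prop))
  simp_rw [mul_assoc]
  calc ∫ y in (0:ℝ)..1, y ^ (1 - γ) * (Real.exp (-l * √(y ^ 2 + 1)) * I0 (j * y))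
      ≤ ∫ y in (0:ℝ)..1, y ^ (1 - γ) * Real.exp (-√(l ^ 2 - j ^ 2)) :=
        intervalIntegral.integral_mono_on zero_le_one hintegrand (hrpow.mul_const _)
          fun y hy => mul_le_mul_of_nonneg_left (exp_mul_I0_le habs y)
            (Real.rpow_nonneg hy.1 _)
    _ = (2 - γ)⁻¹ * Real.exp (-√(l ^ 2 - j ^ 2)) := by
        rw [intervalIntegral.integral_mul_const, integral_rpow_zero_one hr]
        ring_nf

end
end

section
/- Let l, j be real numbers with 0 ≤ j < l. Then ∫₀^∞ (y/√(1+y²)) exp(−l√(y²+1)) I₀(jy) dy = exp(−√(l² − j²))/√(l² − j²). -/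
noncomputable section
open Real MeasureTheory

/-!
Identify `x ∈ ℝ²` with the point `(√(1 + |x|²), x)` of the upper sheet of the unit hyperboloid
in Minkowski space `ℝ^{1,2}`; its Lorentz-invariant measure is `dx / √(1 + |x|²)`. In polar
coordinates `x = (r cos θ, r sin θ)` the angular integral of `exp (j x₁)` is `2π I₀(j r)`, so
`2π` times the integral in question is `∫ exp (-(l √(1 + |x|²) - j x₁)) dx / √(1 + |x|²)`, the
Laplace transform of the invariant measure at the timelike vector `(l, j, 0)`. A boost in the
`(t, x₁)`-plane maps this vector to `(√(l² - j²), 0, 0)`, and at `j = 0` the remaining radial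
integral `∫₀^∞ r e^{-m√(1+r²)} / √(1+r²) dr = e^{-m} / m` is elementary.
-/

open Set Filter

theorem hasDerivAt_neg_exp_neg_mul_sqrt_one_add_sq_div {m : ℝ} (hm : m ≠ 0) (r : ℝ) :
    HasDerivAt (fun r => -exp (-m * √(1 + r ^ 2)) / m)
      (r / √(1 + r ^ 2) * exp (-m * √(1 + r ^ 2))) r := by
  have hsq : HasDerivAt (fun r : ℝ => 1 + r ^ 2) (2 * r) r := by
    simpa using (hasDerivAt_pow 2 r).const_add 1
  refine ((((hsq.sqrt (by positivity)).const_mul (-m)).exp).neg.div_const m).congr_deriv ?_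
  have : √(1 + r ^ 2) ≠ 0 := by positivity
  field_simp

theorem tendsto_neg_exp_neg_mul_sqrt_one_add_sq_div {m : ℝ} (hm : 0 < m) :
    Tendsto (fun r : ℝ => -exp (-m * √(1 + r ^ 2)) / m) atTop (nhds 0) := by
  have hsqrt : Tendsto (fun r : ℝ => √(1 + r ^ 2)) atTop atTop :=
    tendsto_sqrt_atTop.comp (tendsto_atTop_add_const_left _ _ (tendsto_pow_atTop two_ne_zero))
  simpa using
    (tendsto_exp_atBot.comp (hsqrt.const_mul_atTop_of_neg (neg_neg_of_pos hm))).neg.div_const m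

theorem integrableOn_Ioi_div_sqrt_one_add_sq_mul_exp {m : ℝ} (hm : 0 < m) :
    IntegrableOn (fun r => r / √(1 + r ^ 2) * exp (-m * √(1 + r ^ 2))) (Ioi 0) :=
  integrableOn_Ioi_deriv_of_nonneg'
    (fun r _ => hasDerivAt_neg_exp_neg_mul_sqrt_one_add_sq_div hm.ne' r)
    (fun r (hr : 0 < r) => by positivity) (tendsto_neg_exp_neg_mul_sqrt_one_add_sq_div hm)

theorem integral_Ioi_div_sqrt_one_add_sq_mul_exp {m : ℝ} (hm : 0 < m) :
    ∫ r in Ioi 0, r / √(1 + r ^ 2) * exp (-m * √(1 + r ^ 2)) = exp (-m) / m := by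
  rw [integral_Ioi_of_hasDerivAt_of_nonneg'
    (fun r _ => hasDerivAt_neg_exp_neg_mul_sqrt_one_add_sq_div hm.ne' r)
    (fun r (hr : 0 < r) => by positivity) (tendsto_neg_exp_neg_mul_sqrt_one_add_sq_div hm)]
  simp [neg_div]

theorem I0_zero : I0 0 = 1 := by
  simp [I0, pi_ne_zero]

theorem integral_exp_mul_cos_Ioo (z : ℝ) :
    ∫ θ in Ioo (-π) π, exp (z * cos θ) = 2 * π * I0 z := by
  have hc : Continuous fun θ => exp (z * cos θ) := by fun_prop
  rw [← integral_Ioc_eq_integral_Ioo, ← intervalIntegral.integral_of_le (by linarith [pi_pos]),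
    ← intervalIntegral.integral_add_adjacent_intervals (b := 0) (hc.intervalIntegrable _ _)
      (hc.intervalIntegrable _ _)]
  have heven : ∫ θ in -π..0, exp (z * cos θ) = ∫ θ in 0..π, exp (z * cos θ) := by
    simpa using
      (intervalIntegral.integral_comp_neg (a := 0) (b := π) fun θ => exp (z * cos θ)).symm
  rw [heven, I0]
  field_simp
  ring

theorem integrable_iff_integrableOn_polarCoord_target {E : Type*} [NormedAddCommGroup E]
    [NormedSpace ℝ E] {f : ℝ × ℝ → E} :
    Integrable f ↔ IntegrableOn (fun p => p.1 • f (polarCoord.symm p)) polarCoord.target := by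
  rw [← integrableOn_univ, ← integrableOn_congr_set_ae polarCoord_source_ae_eq_univ,
    ← polarCoord.symm_image_target_eq_source,
    integrableOn_image_iff_integrableOn_abs_det_fderiv_smul volume
      polarCoord.open_target.measurableSet
      (fun p _ => (hasFDerivAt_polarCoord_symm p).hasFDerivWithinAt) polarCoord.symm.injOn]
  refine integrableOn_congr_fun (fun p hp => ?_) polarCoord.open_target.measurableSet
  simp only [det_fderivPolarCoordSymm, abs_of_pos (show 0 < p.1 from hp.1)]

def hyperboloidHeight (u b : ℝ) : ℝ := √(1 + u ^ 2 + b ^ 2)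

def hyperboloidKernel (l j : ℝ) (x : ℝ × ℝ) : ℝ :=
  exp (-(l * hyperboloidHeight x.1 x.2 - j * x.1)) / hyperboloidHeight x.1 x.2

/-- The `x₁`-coordinate of the image of the hyperboloid point `(hyperboloidHeight u b, u, b)`
under the boost `(t, x₁) ↦ (p t - q x₁, p x₁ - q t)`. -/
def lorentzBoost (p q b u : ℝ) : ℝ := p * u - q * hyperboloidHeight u b

theorem hyperboloidHeight_pos (u b : ℝ) : 0 < hyperboloidHeight u b := by
  unfold hyperboloidHeight; positivity

theorem sq_hyperboloidHeight (u b : ℝ) : hyperboloidHeight u b ^ 2 = 1 + u ^ 2 + b ^ 2 :=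
  sq_sqrt (by positivity)

theorem abs_le_hyperboloidHeight (u b : ℝ) : |u| ≤ hyperboloidHeight u b := by
  rw [← sqrt_sq_eq_abs]
  exact sqrt_le_sqrt (by nlinarith [sq_nonneg b])

theorem hyperboloidHeight_polar (r θ : ℝ) :
    hyperboloidHeight (r * cos θ) (r * sin θ) = √(1 + r ^ 2) := by
  rw [hyperboloidHeight, add_assoc, mul_pow, mul_pow, ← mul_add, cos_sq_add_sin_sq, mul_one]

theorem continuous_hyperboloidKernel (l j : ℝ) : Continuous (hyperboloidKernel l j) :=
  Continuous.div (by unfold hyperboloidHeight; fun_prop) (by unfold hyperboloidHeight; fun_prop)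
    fun x => (hyperboloidHeight_pos x.1 x.2).ne'

theorem hyperboloidKernel_nonneg (l j : ℝ) (x : ℝ × ℝ) : 0 ≤ hyperboloidKernel l j x :=
  div_nonneg (exp_pos _).le (hyperboloidHeight_pos x.1 x.2).le

theorem hyperboloidKernel_le {l j : ℝ} (x : ℝ × ℝ) :
    hyperboloidKernel l j x ≤ hyperboloidKernel (l - |j|) 0 x := by
  have hjx : j * x.1 ≤ |j| * hyperboloidHeight x.1 x.2 :=
    (le_abs_self _).trans <| (abs_mul j x.1).trans_le <|
      mul_le_mul_of_nonneg_left (abs_le_hyperboloidHeight x.1 x.2) (abs_nonneg j)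
  exact div_le_div_of_nonneg_right (exp_le_exp.2 (by linarith))
    (hyperboloidHeight_pos x.1 x.2).le

theorem mul_hyperboloidKernel_polar (l j r θ : ℝ) :
    r * hyperboloidKernel l j (r * cos θ, r * sin θ)
      = r / √(1 + r ^ 2) * exp (-l * √(1 + r ^ 2)) * exp (j * r * cos θ) := by
  simp only [hyperboloidKernel, hyperboloidHeight_polar]
  rw [show -(l * √(1 + r ^ 2) - j * (r * cos θ)) = -l * √(1 + r ^ 2) + j * r * cos θ by ring,
    exp_add]
  ring

theorem integrableOn_polarCoord_hyperboloidKernel {l j : ℝ} (hjl : |j| < l) :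
    IntegrableOn (fun p => p.1 • hyperboloidKernel l j (polarCoord.symm p))
      polarCoord.target := by
  have hg : IntegrableOn
      (fun p : ℝ × ℝ => p.1 / √(1 + p.1 ^ 2) * exp (-(l - |j|) * √(1 + p.1 ^ 2)) * 1)
      (Ioi 0 ×ˢ Ioo (-π) π) := by
    rw [IntegrableOn, Measure.volume_eq_prod, ← Measure.prod_restrict]
    exact (integrableOn_Ioi_div_sqrt_one_add_sq_mul_exp (sub_pos.2 hjl)).mul_prod
      (integrableOn_const measure_Ioo_lt_top.ne)
  rw [polarCoord_target]
  refine hg.mono' ((continuous_fst.smul ((continuous_hyperboloidKernel l j).comp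
    continuous_polarCoord_symm)).aestronglyMeasurable) ?_
  rw [ae_restrict_iff' (measurableSet_Ioi.prod measurableSet_Ioo)]
  refine Eventually.of_forall fun ⟨r, θ⟩ ⟨hr, _⟩ => ?_
  have hr : 0 < r := hr
  calc ‖r • hyperboloidKernel l j (polarCoord.symm (r, θ))‖
      = r * hyperboloidKernel l j (r * cos θ, r * sin θ) := by
        rw [polarCoord_symm_apply, smul_eq_mul, norm_of_nonneg
          (mul_nonneg hr.le (hyperboloidKernel_nonneg ..))]
    _ ≤ r * hyperboloidKernel (l - |j|) 0 (r * cos θ, r * sin θ) := by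
        gcongr; exact hyperboloidKernel_le _
    _ = _ := by rw [mul_hyperboloidKernel_polar]; simp

theorem integrable_hyperboloidKernel {l j : ℝ} (hjl : |j| < l) :
    Integrable (hyperboloidKernel l j) :=
  integrable_iff_integrableOn_polarCoord_target.2 (integrableOn_polarCoord_hyperboloidKernel hjl)

theorem integral_hyperboloidKernel_eq_integral_I0 {l j : ℝ} (hjl : |j| < l) :
    ∫ x, hyperboloidKernel l j x = 2 * π * ∫ y in Ioi (0:ℝ),
      (y / √(1 + y ^ 2)) * exp (-l * √(y ^ 2 + 1)) * I0 (j * y) := by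
  have h := integrableOn_polarCoord_hyperboloidKernel hjl
  rw [polarCoord_target, IntegrableOn, Measure.volume_eq_prod, ← Measure.prod_restrict] at h
  rw [← integral_comp_polarCoord_symm, polarCoord_target, Measure.volume_eq_prod,
    ← Measure.prod_restrict, integral_prod _ h, ← integral_const_mul]
  refine setIntegral_congr_fun measurableSet_Ioi fun r _ => ?_
  simp only [polarCoord_symm_apply, smul_eq_mul, mul_hyperboloidKernel_polar]
  rw [integral_const_mul, integral_exp_mul_cos_Ioo, add_comm (r ^ 2)]
  ring

theorem hasDerivAt_lorentzBoost (p q b u : ℝ) :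
    HasDerivAt (lorentzBoost p q b) (p - q * (u / hyperboloidHeight u b)) u := by
  have hsq : HasDerivAt (fun u : ℝ => 1 + u ^ 2 + b ^ 2) (2 * u) u := by
    simpa using ((hasDerivAt_pow 2 u).const_add 1).add_const (b ^ 2)
  refine ((hasDerivAt_id u).const_mul p |>.sub
    ((hsq.sqrt (by positivity)).const_mul q)).congr_deriv ?_
  simp only [hyperboloidHeight]
  have : √(1 + u ^ 2 + b ^ 2) ≠ 0 := by positivity
  field_simp

section Boost

variable {p q : ℝ} (hp : 0 < p) (hpq : p ^ 2 - q ^ 2 = 1)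
include hp hpq

theorem mul_hyperboloidHeight_sub_pos (u b : ℝ) : 0 < p * hyperboloidHeight u b - q * u := by
  have hqp : |q| < p := abs_lt_of_sq_lt_sq (by linarith) hp.le
  have hτ := hyperboloidHeight_pos u b
  refine sub_pos.2 ?_
  calc q * u ≤ |q| * |u| := (le_abs_self _).trans (abs_mul q u).le
    _ ≤ |q| * hyperboloidHeight u b := by gcongr; exact abs_le_hyperboloidHeight u b
    _ < p * hyperboloidHeight u b := by gcongr

theorem hyperboloidHeight_lorentzBoost (u b : ℝ) :
    hyperboloidHeight (lorentzBoost p q b u) b = p * hyperboloidHeight u b - q * u := by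
  rw [hyperboloidHeight, ← sqrt_sq (mul_hyperboloidHeight_sub_pos hp hpq u b).le]
  congr 1
  unfold lorentzBoost
  linear_combination (-(1:ℝ)) * sq_hyperboloidHeight u b
    - (hyperboloidHeight u b ^ 2 - u ^ 2) * hpq

theorem lorentzBoost_neg_lorentzBoost (b u : ℝ) :
    lorentzBoost p (-q) b (lorentzBoost p q b u) = u := by
  rw [lorentzBoost, hyperboloidHeight_lorentzBoost hp hpq]
  unfold lorentzBoost
  linear_combination u * hpq

theorem abs_deriv_mul_hyperboloidKernel_lorentzBoost (m u b : ℝ) :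
    |p - q * (u / hyperboloidHeight u b)| * hyperboloidKernel m 0 (lorentzBoost p q b u, b)
      = hyperboloidKernel (m * p) (m * q) (u, b) := by
  have hτ := hyperboloidHeight_pos u b
  have hT := mul_hyperboloidHeight_sub_pos hp hpq u b
  have hderiv : p - q * (u / hyperboloidHeight u b)
      = (p * hyperboloidHeight u b - q * u) / hyperboloidHeight u b := by
    field_simp
  simp only [hyperboloidKernel, hyperboloidHeight_lorentzBoost hp hpq, hderiv,
    abs_of_pos (div_pos hT hτ), zero_mul, sub_zero]
  field_simp

theorem integral_hyperboloidKernel_lorentzBoost (m b : ℝ) :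
    ∫ u, hyperboloidKernel (m * p) (m * q) (u, b) = ∫ u, hyperboloidKernel m 0 (u, b) := by
  have hpq' : p ^ 2 - (-q) ^ 2 = 1 := by rwa [neg_sq]
  have himage : lorentzBoost p q b '' univ = univ :=
    image_univ_of_surjective fun u =>
      ⟨_, by simpa using lorentzBoost_neg_lorentzBoost hp hpq' b u⟩
  have hinj : InjOn (lorentzBoost p q b) univ :=
    (Function.LeftInverse.injective (lorentzBoost_neg_lorentzBoost hp hpq b)).injOn
  symm
  rw [← setIntegral_univ, ← himage, integral_image_eq_integral_abs_deriv_smul MeasurableSet.univ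
      (fun u _ => (hasDerivAt_lorentzBoost p q b u).hasDerivWithinAt) hinj, setIntegral_univ]
  simp only [smul_eq_mul, abs_deriv_mul_hyperboloidKernel_lorentzBoost hp hpq]

end Boost

theorem integral_hyperboloidKernel_eq_sqrt {l j : ℝ} (hjl : |j| < l) :
    ∫ x, hyperboloidKernel l j x = ∫ x, hyperboloidKernel (√(l ^ 2 - j ^ 2)) 0 x := by
  have hl : 0 < l := (abs_nonneg j).trans_lt hjl
  have hlj : 0 < l ^ 2 - j ^ 2 := by nlinarith [sq_abs j, abs_nonneg j]
  set m := √(l ^ 2 - j ^ 2)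
  have hm : 0 < m := sqrt_pos.2 hlj
  have hpq : (l / m) ^ 2 - (j / m) ^ 2 = 1 := by
    rw [div_pow, div_pow, sq_sqrt hlj.le]; field_simp
  have hboost := integral_hyperboloidKernel_lorentzBoost (div_pos hl hm) hpq m
  rw [mul_div_cancel₀ _ hm.ne', mul_div_cancel₀ _ hm.ne'] at hboost
  rw [Measure.volume_eq_prod, integral_prod_symm _ (integrable_hyperboloidKernel hjl),
    integral_prod_symm _ (integrable_hyperboloidKernel (by simpa using hm))]
  simp only [hboost]

/-- The exact formula (2.14) for `J₂(l,j)`. -/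
theorem J2_formula (l j : ℝ) (hj : 0 ≤ j) (hjl : j < l) :
    ∫ y in Set.Ioi (0:ℝ),
        (y / Real.sqrt (1 + y ^ 2)) * Real.exp (-l * Real.sqrt (y ^ 2 + 1)) * I0 (j * y)
      = Real.exp (-Real.sqrt (l ^ 2 - j ^ 2)) / Real.sqrt (l ^ 2 - j ^ 2) := by
  have hjl' : |j| < l := by rwa [abs_of_nonneg hj]
  have hm : 0 < √(l ^ 2 - j ^ 2) := sqrt_pos.2 (by nlinarith)
  have h := integral_hyperboloidKernel_eq_sqrt hjl'
  rw [integral_hyperboloidKernel_eq_integral_I0 hjl',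
    integral_hyperboloidKernel_eq_integral_I0 (by simpa using hm)] at h
  simp only [zero_mul, I0_zero, mul_one, add_comm _ (1 : ℝ)] at h ⊢
  rw [mul_left_cancel₀ two_pi_pos.ne' h, integral_Ioi_div_sqrt_one_add_sq_mul_exp hm]

end
end

section
/- Let g, G be real numbers with 0 < g ≤ G, let a ∈ (−4, 2], and set s = g² + 4 and S = G² + 4. Then 0 ≤ 1 − (s·g^{4+a})/(S·G^{4+a}) ≤ 4(G² − g²)/G². -/
/-!
With `t = g / G ∈ (0, 1]` the ratio is `(s / S) · t^(4+a)`. Both factors are at most `1`, and from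
below `s / S ≥ t²` (adding `4` to numerator and denominator of `g² / G²` increases it) and
`t^(4+a) ≥ t⁶` (as `4 + a ≤ 6`), so the ratio is at least `u⁴` with `u = t²`. Bernoulli's
inequality `1 - u⁴ ≤ 4 (1 - u)` finishes, since `1 - u = (G² - g²) / G²`.
-/

open Real

theorem one_sub_pow_le_mul_one_sub {u : ℝ} (hu : 0 ≤ u) (n : ℕ) : 1 - u ^ n ≤ n * (1 - u) := by
  have h := one_add_mul_le_pow (a := u - 1) (by linarith) n
  rw [add_sub_cancel] at h
  linarith

theorem div_le_add_div_add {x y c : ℝ} (hxy : x ≤ y) (hy : 0 < y) (hc : 0 ≤ c) :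
    x / y ≤ (x + c) / (y + c) := by
  rw [div_le_div_iff₀ hy (by positivity)]
  nlinarith

/-- The key ratio estimate: for `0 < g ≤ G`, `a ∈ (−4,2]`, with `s = g²+4`, `S = G²+4`,
`0 ≤ 1 − (s g^{4+a})/(S G^{4+a}) ≤ 4(G² − g²)/G²`. -/
theorem ratio_difference_estimate (g G a : ℝ) (hg : 0 < g) (hgG : g ≤ G)
    (ha : a ∈ Set.Ioc (-4:ℝ) 2) :
    0 ≤ 1 - ((g ^ 2 + 4) * g ^ (4 + a)) / ((G ^ 2 + 4) * G ^ (4 + a)) ∧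
    1 - ((g ^ 2 + 4) * g ^ (4 + a)) / ((G ^ 2 + 4) * G ^ (4 + a))
      ≤ 4 * (G ^ 2 - g ^ 2) / G ^ 2 := by
  obtain ⟨ha₁, ha₂⟩ := ha
  have hG : 0 < G := hg.trans_le hgG
  have ht₀ : 0 < g / G := div_pos hg hG
  have ht₁ : g / G ≤ 1 := div_le_one_of_le₀ hgG hG.le
  have hsq : g ^ 2 ≤ G ^ 2 := pow_le_pow_left₀ hg.le hgG 2
  have hsS : (g ^ 2 + 4) / (G ^ 2 + 4) ≤ 1 := div_le_one_of_le₀ (by linarith) (by positivity)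
  have hsS' : (g / G) ^ 2 ≤ (g ^ 2 + 4) / (G ^ 2 + 4) := by
    rw [div_pow]
    exact div_le_add_div_add hsq (by positivity) zero_le_four
  have hpow : (g / G) ^ (6 : ℝ) ≤ (g / G) ^ (4 + a) :=
    rpow_le_rpow_of_exponent_ge ht₀ ht₁ (by linarith)
  rw [mul_div_mul_comm, ← div_rpow hg.le hG.le]
  constructor
  · linarith [mul_le_one₀ hsS (rpow_nonneg ht₀.le _) (rpow_le_one ht₀.le ht₁ (z := 4 + a) (by linarith))]
  · calc 1 - (g ^ 2 + 4) / (G ^ 2 + 4) * (g / G) ^ (4 + a)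
        ≤ 1 - ((g / G) ^ 2) ^ 4 := by
          have h8 : ((g / G) ^ 2) ^ 4 = (g / G) ^ 2 * (g / G) ^ (6 : ℝ) := by
            norm_cast; ring
          rw [h8]
          gcongr
      _ ≤ 4 * (1 - (g / G) ^ 2) := by exact_mod_cast one_sub_pow_le_mul_one_sub (sq_nonneg _) 4
      _ = 4 * (G ^ 2 - g ^ 2) / G ^ 2 := by field_simp
end
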